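/- Let Q, V ∈ R^{d×k} have orthonormal columns with dist(Q,V) = ‖VVᵀ − QQᵀ‖_op ≤ 1/√2, and let R be a Procrustes rotation minimizing ‖Q − VR‖_F over orthogonal R. Then ‖QᵀV − Rᵀ‖_F ≤ √2 · k^{1/2} · dist(Q,V). -/

import Mathlib

open Matrix

/-- Operator (spectral) norm of a square real matrix. -/
noncomputable def opNorm {d : ℕ} (A : Matrix (Fin d) (Fin d) ℝ) : ℝ :=
  ‖(Matrix.toEuclideanCLM (𝕜 := ℝ) A :
      EuclideanSpace ℝ (Fin d) →L[ℝ] EuclideanSpace ℝ (Fin d))‖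

/-- Subspace distance `dist(Q,V) = ‖VVᵀ − QQᵀ‖_op`. -/
noncomputable def distSub {d k : ℕ} (Q V : Matrix (Fin d) (Fin k) ℝ) : ℝ :=
  opNorm (V * Vᵀ - Q * Qᵀ)

/-- Frobenius norm of a rectangular real matrix. -/
noncomputable def frobNorm {m n : ℕ} (A : Matrix (Fin m) (Fin n) ℝ) : ℝ :=
  Real.sqrt (∑ i, ∑ j, (A i j) ^ 2)

/-! Write `M = QᵀV`. For orthogonal `R`, `‖Q - VR‖_F² = 2k - 2 tr(MR)`, so the Procrustes
minimizer `R` maximizes `tr(MR)`; in particular it beats the polar factor `R' = Mᵀ(MMᵀ)^{-1/2}`,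
for which `tr(MR') = ∑ √λᵢ` over the eigenvalues `λᵢ` of `MMᵀ`. Hence
`‖M - Rᵀ‖_F² = tr(MMᵀ) - 2 tr(MR) + k ≤ ∑ (1 - √λᵢ)² ≤ ∑ (1 - λᵢ)`.
Each `λᵢ` lies in `[1 - dist(Q,V)², 1]`: for a unit vector `x` and `y = Qx`, the defect
`1 - |Vᵀy|²` is the squared length of `y - VVᵀy = (QQᵀ - VVᵀ)y`. -/

section Frobenius

variable {m n α : Type*} [Fintype m] [Fintype n] [CommRing α]

lemma Matrix.trace_transpose_mul_self_sub (A B : Matrix m n α) :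
    trace ((A - B)ᵀ * (A - B)) = trace (Aᵀ * A) - 2 * trace (Aᵀ * B) + trace (Bᵀ * B) := by
  have hBA : trace (Bᵀ * A) = trace (Aᵀ * B) := by
    rw [← trace_transpose, transpose_mul, transpose_transpose]
  rw [transpose_sub, Matrix.sub_mul, Matrix.mul_sub, Matrix.mul_sub, trace_sub, trace_sub,
    trace_sub, hBA]
  ring

lemma Matrix.trace_transpose_mul_self_sub_of_isometry [DecidableEq n] {A B : Matrix m n α}
    (hA : Aᵀ * A = 1) (hB : Bᵀ * B = 1) :
    trace ((A - B)ᵀ * (A - B)) = 2 * Fintype.card n - 2 * trace (Aᵀ * B) := by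
  rw [trace_transpose_mul_self_sub, hA, hB, trace_one]
  ring

end Frobenius

lemma frobNorm_nonneg {m n : ℕ} (A : Matrix (Fin m) (Fin n) ℝ) : 0 ≤ frobNorm A :=
  Real.sqrt_nonneg _

lemma frobNorm_sq {m n : ℕ} (A : Matrix (Fin m) (Fin n) ℝ) :
    frobNorm A ^ 2 = trace (Aᵀ * A) := by
  rw [frobNorm, Real.sq_sqrt (by positivity), trace, Finset.sum_comm]
  simp [mul_apply, sq]

lemma frobNorm_le_frobNorm_iff {m n : ℕ} {A B : Matrix (Fin m) (Fin n) ℝ} :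
    frobNorm A ≤ frobNorm B ↔ trace (Aᵀ * A) ≤ trace (Bᵀ * B) := by
  rw [← frobNorm_sq, ← frobNorm_sq, sq_le_sq₀ (frobNorm_nonneg A) (frobNorm_nonneg B)]

lemma trace_mul_le_of_forall_frobNorm_le {d k : ℕ} {Q V : Matrix (Fin d) (Fin k) ℝ}
    {R : Matrix (Fin k) (Fin k) ℝ} (hQ : Qᵀ * Q = 1) (hV : Vᵀ * V = 1) (hR : Rᵀ * R = 1)
    (hmin : ∀ R' : Matrix (Fin k) (Fin k) ℝ, R'ᵀ * R' = 1 →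
      frobNorm (Q - V * R) ≤ frobNorm (Q - V * R'))
    {R' : Matrix (Fin k) (Fin k) ℝ} (hR' : R'ᵀ * R' = 1) :
    trace (Qᵀ * V * R') ≤ trace (Qᵀ * V * R) := by
  have hVR {S : Matrix (Fin k) (Fin k) ℝ} (hS : Sᵀ * S = 1) : (V * S)ᵀ * (V * S) = 1 := by
    rw [transpose_mul, Matrix.mul_assoc, ← Matrix.mul_assoc Vᵀ, hV, Matrix.one_mul, hS]
  have h := frobNorm_le_frobNorm_iff.mp (hmin R' hR')
  rw [trace_transpose_mul_self_sub_of_isometry hQ (hVR hR),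
    trace_transpose_mul_self_sub_of_isometry hQ (hVR hR'), ← Matrix.mul_assoc,
    ← Matrix.mul_assoc] at h
  linarith

section Isometry

variable {m n α : Type*} [Fintype m] [Fintype n] [DecidableEq n] [CommRing α] {A : Matrix m n α}

lemma Matrix.dotProduct_mulVec_self_of_isometry (hA : Aᵀ * A = 1) (x : n → α) :
    (A *ᵥ x) ⬝ᵥ (A *ᵥ x) = x ⬝ᵥ x := by
  rw [dotProduct_mulVec, vecMul_mulVec, ← mulVec_transpose, hA, transpose_one, one_mulVec]

lemma Matrix.dotProduct_self_sub_mulVec_transpose_mulVec (hA : Aᵀ * A = 1) (y : m → α) :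
    (y - A *ᵥ (Aᵀ *ᵥ y)) ⬝ᵥ (y - A *ᵥ (Aᵀ *ᵥ y)) = y ⬝ᵥ y - (Aᵀ *ᵥ y) ⬝ᵥ (Aᵀ *ᵥ y) := by
  have hcross : y ⬝ᵥ (A *ᵥ (Aᵀ *ᵥ y)) = (Aᵀ *ᵥ y) ⬝ᵥ (Aᵀ *ᵥ y) := by
    rw [dotProduct_mulVec, ← mulVec_transpose, dotProduct_comm]
  rw [sub_dotProduct, dotProduct_sub, dotProduct_sub, dotProduct_comm (A *ᵥ _) y, hcross,
    dotProduct_mulVec_self_of_isometry hA]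
  ring

end Isometry

lemma EuclideanSpace.norm_sq_eq_dotProduct {n : Type*} [Fintype n] (x : EuclideanSpace ℝ n) :
    ‖x‖ ^ 2 = x.ofLp ⬝ᵥ x.ofLp := by
  rw [EuclideanSpace.real_norm_sq_eq]
  simp [dotProduct, sq]

lemma dotProduct_mulVec_self_le_opNorm_sq {d : ℕ} (A : Matrix (Fin d) (Fin d) ℝ)
    (y : Fin d → ℝ) : (A *ᵥ y) ⬝ᵥ (A *ᵥ y) ≤ opNorm A ^ 2 * (y ⬝ᵥ y) := by
  have hnorm (z : Fin d → ℝ) : ‖(WithLp.toLp 2 z : EuclideanSpace ℝ (Fin d))‖ ^ 2 = z ⬝ᵥ z :=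
    EuclideanSpace.norm_sq_eq_dotProduct _
  rw [← hnorm, ← hnorm, ← mul_pow, ← toEuclideanCLM_toLp]
  exact pow_le_pow_left₀ (norm_nonneg _) ((toEuclideanCLM (𝕜 := ℝ) A).le_opNorm _) 2

lemma dotProduct_mulVec_mem_Icc_of_distSub {d k : ℕ} {Q V : Matrix (Fin d) (Fin k) ℝ}
    (hQ : Qᵀ * Q = 1) (hV : Vᵀ * V = 1) {x : Fin k → ℝ} (hx : x ⬝ᵥ x = 1) :
    x ⬝ᵥ (((Qᵀ * V) * (Qᵀ * V)ᵀ) *ᵥ x) ∈ Set.Icc (1 - distSub Q V ^ 2) 1 := by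
  set y := Q *ᵥ x
  have hy : y ⬝ᵥ y = 1 := by rw [dotProduct_mulVec_self_of_isometry hQ, hx]
  have hform : x ⬝ᵥ (((Qᵀ * V) * (Qᵀ * V)ᵀ) *ᵥ x) = (Vᵀ *ᵥ y) ⬝ᵥ (Vᵀ *ᵥ y) := by
    rw [← mulVec_mulVec, dotProduct_mulVec, ← mulVec_transpose, dotProduct_comm,
      transpose_mul, transpose_transpose, ← mulVec_mulVec]
  have hQy : Q *ᵥ (Qᵀ *ᵥ y) = y := by simp only [y, mulVec_mulVec, hQ, Matrix.mul_one]
  have hres : y - V *ᵥ (Vᵀ *ᵥ y) = -((V * Vᵀ - Q * Qᵀ) *ᵥ y) := by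
    rw [sub_mulVec, ← mulVec_mulVec, ← mulVec_mulVec, hQy, neg_sub]
  have hpyth := dotProduct_self_sub_mulVec_transpose_mulVec hV y
  have hbound := dotProduct_mulVec_self_le_opNorm_sq (V * Vᵀ - Q * Qᵀ) y
  rw [hres, neg_dotProduct, dotProduct_neg, neg_neg, hy] at hpyth
  rw [hy, mul_one] at hbound
  have hnonneg : 0 ≤ ((V * Vᵀ - Q * Qᵀ) *ᵥ y) ⬝ᵥ ((V * Vᵀ - Q * Qᵀ) *ᵥ y) :=
    Finset.sum_nonneg fun _ _ => mul_self_nonneg _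
  rw [hform, Set.mem_Icc, distSub]
  constructor <;> linarith

lemma Matrix.IsHermitian.eigenvalues_mem_of_forall_dotProduct_mulVec_mem {n : Type*} [Fintype n]
    [DecidableEq n] {A : Matrix n n ℝ} (hA : A.IsHermitian) {s : Set ℝ}
    (h : ∀ x, x ⬝ᵥ x = 1 → x ⬝ᵥ (A *ᵥ x) ∈ s) (i : n) : hA.eigenvalues i ∈ s := by
  have hunit : ⇑(hA.eigenvectorBasis i) ⬝ᵥ ⇑(hA.eigenvectorBasis i) = 1 := by
    rw [← EuclideanSpace.norm_sq_eq_dotProduct, hA.eigenvectorBasis.norm_eq_one, one_pow]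
  simpa [hA.eigenvalues_eq i] using h _ hunit

open Unitary in
lemma Matrix.trace_conjStarAlgAut {n R : Type*} [Fintype n] [DecidableEq n] [CommRing R]
    [StarRing R] (U : unitary (Matrix n n R)) (X : Matrix n n R) :
    trace (conjStarAlgAut R _ U X) = trace X := by
  rw [conjStarAlgAut_apply, trace_mul_cycle, Unitary.coe_star_mul_self, Matrix.one_mul]

open Unitary in
lemma Matrix.exists_orthogonal_trace_mul_eq_sum_sqrt_eigenvalues {n : Type*} [Fintype n]
    [DecidableEq n] {M : Matrix n n ℝ} (hH : (M * Mᵀ).IsHermitian)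
    (hpos : ∀ i, 0 < hH.eigenvalues i) :
    ∃ R : Matrix n n ℝ, Rᵀ * R = 1 ∧ trace (M * R) = ∑ i, √(hH.eigenvalues i) := by
  set c := conjStarAlgAut ℝ (Matrix n n ℝ) hH.eigenvectorUnitary
  set ev := hH.eigenvalues
  -- `N = (M Mᵀ)^{-1/2}`, so that `Mᵀ N` is the orthogonal polar factor of `Mᵀ`.
  set N := c (diagonal fun i => (√(ev i))⁻¹)
  have hspec : M * Mᵀ = c (diagonal ev) := by
    have h := hH.spectral_theorem
    rwa [RCLike.ofReal_real_eq_id, Function.id_comp] at h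
  have hN : Nᵀ = N := by
    rw [← conjTranspose_eq_transpose_of_trivial, ← star_eq_conjTranspose, ← map_star,
      star_eq_conjTranspose, diagonal_conjTranspose, star_trivial]
  have hHN : M * Mᵀ * N = c (diagonal fun i => √(ev i)) := by
    rw [hspec, ← map_mul, diagonal_mul_diagonal]
    simp only [← div_eq_mul_inv, Real.div_sqrt]
  refine ⟨Mᵀ * N, ?_, ?_⟩
  · rw [transpose_mul, transpose_transpose, hN, Matrix.mul_assoc, ← Matrix.mul_assoc M, hHN,
      ← map_mul, diagonal_mul_diagonal, ← map_one c, ← diagonal_one]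
    congr 2 with i
    exact inv_mul_cancel₀ (Real.sqrt_pos.mpr (hpos i)).ne'
  · rw [← Matrix.mul_assoc, hHN, trace_conjStarAlgAut, trace_diagonal]

lemma Real.one_sub_sqrt_sq_le {x : ℝ} (h0 : 0 ≤ x) (h1 : x ≤ 1) : (1 - √x) ^ 2 ≤ 1 - x := by
  have hs : √x ≤ 1 := Real.sqrt_le_one.mpr h1
  nlinarith [Real.sq_sqrt h0, Real.sqrt_nonneg x]

lemma frobNorm_sub_transpose_sq_le {k : ℕ} {M R : Matrix (Fin k) (Fin k) ℝ} (hR : Rᵀ * R = 1)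
    (hH : (M * Mᵀ).IsHermitian) {δ : ℝ} (hev : ∀ i, hH.eigenvalues i ∈ Set.Icc (1 - δ) 1)
    (htr : ∑ i, √(hH.eigenvalues i) ≤ trace (M * R)) :
    frobNorm (M - Rᵀ) ^ 2 ≤ k * δ := by
  set ev := hH.eigenvalues
  -- over `ℝ`, `Mᴴ` is definitionally `Mᵀ`
  have hev0 (i : Fin k) : 0 ≤ ev i := eigenvalues_self_mul_conjTranspose_nonneg M i
  have hRRt : Rᵀᵀ * Rᵀ = 1 := by rw [transpose_transpose]; exact mul_eq_one_comm.mp hR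
  have hcross : trace (Mᵀ * Rᵀ) = trace (M * R) := by
    rw [← transpose_mul, trace_transpose, trace_mul_comm]
  have htrH : trace (Mᵀ * M) = ∑ i, ev i := by
    rw [trace_mul_comm, hH.trace_eq_sum_eigenvalues]
    rfl
  have hexpand : ∑ i, (1 - √(ev i)) ^ 2 = ∑ i, ev i - 2 * ∑ i, √(ev i) + k := by
    simp only [sub_sq, Real.sq_sqrt (hev0 _), Finset.sum_add_distrib, Finset.sum_sub_distrib,
      ← Finset.mul_sum]
    simp only [one_pow, Finset.sum_const, Finset.card_univ, Fintype.card_fin, nsmul_eq_mul,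
      mul_one]
    ring
  rw [frobNorm_sq, trace_transpose_mul_self_sub, hRRt, trace_one, Fintype.card_fin, hcross, htrH]
  calc ∑ i, ev i - 2 * trace (M * R) + k ≤ ∑ i, (1 - √(ev i)) ^ 2 := by linarith
    _ ≤ ∑ _i : Fin k, δ := Finset.sum_le_sum fun i _ =>
        (Real.one_sub_sqrt_sq_le (hev0 i) (hev i).2).trans (by linarith [(hev i).1])
    _ = k * δ := by simp

/-- If `dist(Q,V) ≤ 1/√2` and `R` is a Procrustes rotation minimizing
`‖Q − VR'‖_F` over orthogonal `R'`, then `‖QᵀV − Rᵀ‖_F ≤ √2·k^{1/2}·dist(Q,V)`. -/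
theorem stmt10 (d k : ℕ) (Q V : Matrix (Fin d) (Fin k) ℝ)
    (hQ : Qᵀ * Q = 1) (hV : Vᵀ * V = 1)
    (hdist : distSub Q V ≤ 1 / Real.sqrt 2)
    (R : Matrix (Fin k) (Fin k) ℝ) (hR : Rᵀ * R = 1)
    (hmin : ∀ R' : Matrix (Fin k) (Fin k) ℝ, R'ᵀ * R' = 1 →
      frobNorm (Q - V * R) ≤ frobNorm (Q - V * R')) :
    frobNorm (Qᵀ * V - Rᵀ) ≤ Real.sqrt 2 * Real.sqrt k * distSub Q V := by
  set M := Qᵀ * V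
  set ε := distSub Q V
  have hε0 : 0 ≤ ε := norm_nonneg _
  have hε : ε ^ 2 < 1 := by
    have h := pow_le_pow_left₀ hε0 hdist 2
    rw [div_pow, one_pow, Real.sq_sqrt zero_le_two] at h
    linarith
  have hH : (M * Mᵀ).IsHermitian := by
    simpa [conjTranspose_eq_transpose_of_trivial] using isHermitian_mul_conjTranspose_self M
  have hev (i : Fin k) : hH.eigenvalues i ∈ Set.Icc (1 - ε ^ 2) 1 :=
    hH.eigenvalues_mem_of_forall_dotProduct_mulVec_mem
      (fun _ hx => dotProduct_mulVec_mem_Icc_of_distSub hQ hV hx) i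
  obtain ⟨R', hR', htr⟩ :=
    exists_orthogonal_trace_mul_eq_sum_sqrt_eigenvalues hH fun i => by linarith [(hev i).1]
  have hsq : frobNorm (M - Rᵀ) ^ 2 ≤ (√k * ε) ^ 2 := by
    rw [mul_pow, Real.sq_sqrt (Nat.cast_nonneg k)]
    exact frobNorm_sub_transpose_sq_le hR hH hev
      (htr ▸ trace_mul_le_of_forall_frobNorm_le hQ hV hR hmin hR')
  calc frobNorm (M - Rᵀ) ≤ √k * ε := (pow_le_pow_iff_left₀ (frobNorm_nonneg _)
        (by positivity) two_ne_zero).mp hsq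
    _ ≤ √2 * √k * ε := by
      rw [mul_assoc]
      exact le_mul_of_one_le_left (by positivity) (Real.one_le_sqrt.mpr one_le_two)
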